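/- (Monotonicity of r↑.) If (u₁,v₁) and (u₂,v₂) are both reachable from the top, u₁ ≤ u₂, and v₁ ≥ v₂, then r↑(u₁,v₁) ≤ r↑(u₂,v₂). -/

import Mathlib

open Set

def MonotonicPath (S γ : Set (ℝ × ℝ)) : Prop :=
  γ ⊆ S ∧ IsConnected γ ∧ ∀ p ∈ γ, ∀ q ∈ γ, (p.1 - q.1) * (p.2 - q.2) ≥ 0

def MutuallyReachable (S : Set (ℝ × ℝ)) (p q : ℝ × ℝ) : Prop :=
  ∃ γ : Set (ℝ × ℝ), MonotonicPath S γ ∧ p ∈ γ ∧ q ∈ γ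

/-!
If `r↑(u₁, v₁) > r↑(u₂, v₂)`, the monotonic paths realising the two maxima cross at some `q`.
Following the second path from `(u₂, v₂)` up to `q` and then the first one up to
`(r↑(u₁, v₁), n)` is again a monotonic path, contradicting the maximality of `r↑(u₂, v₂)`.
The topological input is that the piece of a monotonic path between two of its points is
connected: on such a path `p ↦ p.1 + p.2` is injective with a `1`-Lipschitz inverse, so the
piece is a continuous image of an interval.
-/

lemma Prod.mul_sub_nonneg_iff_le_or_le {p q : ℝ × ℝ} :
    (p.1 - q.1) * (p.2 - q.2) ≥ 0 ↔ p ≤ q ∨ q ≤ p := by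
  simp only [Prod.le_def]
  constructor
  · intro h
    rcases le_total p.1 q.1 with h1 | h1 <;> rcases le_total p.2 q.2 with h2 | h2
    · exact .inl ⟨h1, h2⟩
    · rcases h1.eq_or_lt with h1 | h1
      · exact .inr ⟨h1.ge, h2⟩
      · exact .inl ⟨h1.le, by nlinarith⟩
    · rcases h2.eq_or_lt with h2 | h2
      · exact .inr ⟨h1, h2.ge⟩
      · exact .inl ⟨by nlinarith, h2.le⟩
    · exact .inr ⟨h1, h2⟩
  · rintro (⟨h1, h2⟩ | ⟨h1, h2⟩)
    · exact mul_nonneg_of_nonpos_of_nonpos (sub_nonpos.2 h1) (sub_nonpos.2 h2)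
    · exact mul_nonneg (sub_nonneg.2 h1) (sub_nonneg.2 h2)

lemma Prod.dist_le_sum_sub_sum_of_le {p q : ℝ × ℝ} (h : p ≤ q) :
    dist p q ≤ (q.1 + q.2) - (p.1 + p.2) := by
  rw [Prod.dist_eq, Real.dist_eq, Real.dist_eq, abs_sub_comm p.1, abs_sub_comm p.2,
    abs_of_nonneg (sub_nonneg.2 h.1), abs_of_nonneg (sub_nonneg.2 h.2)]
  exact max_le (by linarith [h.2]) (by linarith [h.1])

namespace IsChain

variable {γ : Set (ℝ × ℝ)}

lemma dist_le_abs_sum_sub_sum (hγ : IsChain (· ≤ ·) γ) {p q : ℝ × ℝ} (hp : p ∈ γ)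
    (hq : q ∈ γ) : dist p q ≤ |(p.1 + p.2) - (q.1 + q.2)| := by
  rcases hγ.total hp hq with h | h
  · exact (Prod.dist_le_sum_sub_sum_of_le h).trans ((le_abs_self _).trans_eq (abs_sub_comm _ _))
  · exact dist_comm p q ▸ (Prod.dist_le_sum_sub_sum_of_le h).trans (le_abs_self _)

lemma injOn_fst_add_snd (hγ : IsChain (· ≤ ·) γ) : InjOn (fun p : ℝ × ℝ ↦ p.1 + p.2) γ :=
  fun p hp q hq h ↦ dist_le_zero.1 <| (hγ.dist_le_abs_sum_sub_sum hp hq).trans_eq <| by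
    rw [sub_eq_zero.2 h, abs_zero]

lemma lipschitzOnWith_invFunOn_fst_add_snd (hγ : IsChain (· ≤ ·) γ) :
    LipschitzOnWith 1 (Function.invFunOn (fun p : ℝ × ℝ ↦ p.1 + p.2) γ)
      ((fun p : ℝ × ℝ ↦ p.1 + p.2) '' γ) := by
  refine .mk_one fun s hs t ht ↦ ?_
  have hs' := Function.invFunOn_eq (f := fun p : ℝ × ℝ ↦ p.1 + p.2) hs
  have ht' := Function.invFunOn_eq (f := fun p : ℝ × ℝ ↦ p.1 + p.2) ht
  calc _ ≤ |_ - _| :=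
        hγ.dist_le_abs_sum_sub_sum (Function.invFunOn_mem hs) (Function.invFunOn_mem ht)
    _ = dist s t := by rw [hs', ht', Real.dist_eq]

lemma isPreconnected_inter_preimage (hγ : IsChain (· ≤ ·) γ) (hc : IsPreconnected γ)
    {J : Set ℝ} (hJ : J.OrdConnected) :
    IsPreconnected (γ ∩ (fun p : ℝ × ℝ ↦ p.1 + p.2) ⁻¹' J) := by
  set f : ℝ × ℝ → ℝ := fun p ↦ p.1 + p.2
  have hf : Continuous f := continuous_fst.add continuous_snd
  have himage : IsPreconnected (f '' γ ∩ J) :=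
    ((hc.image f hf.continuousOn).ordConnected.inter hJ).isPreconnected
  rw [← hγ.injOn_fst_add_snd.leftInvOn_invFunOn.image_image' inter_subset_left,
    image_inter_preimage]
  exact himage.image _ (hγ.lipschitzOnWith_invFunOn_fst_add_snd.continuousOn.mono
    inter_subset_left)

lemma inter_Icc_eq_inter_preimage (hγ : IsChain (· ≤ ·) γ) {a b : ℝ × ℝ} (ha : a ∈ γ)
    (hb : b ∈ γ) : γ ∩ Icc a b =
      γ ∩ (fun p : ℝ × ℝ ↦ p.1 + p.2) ⁻¹' Icc (a.1 + a.2) (b.1 + b.2) := by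
  ext p
  simp only [mem_inter_iff, mem_Icc, mem_preimage, and_congr_right_iff]
  intro hp
  refine ⟨fun h ↦ ⟨by linarith [h.1.1, h.1.2], by linarith [h.2.1, h.2.2]⟩, fun h ↦ ⟨?_, ?_⟩⟩
  · rcases hγ.total ha hp with hap | hpa
    · exact hap
    · exact (hγ.injOn_fst_add_snd hp ha (by linarith [hpa.1, hpa.2, h.1])) ▸ le_rfl
  · rcases hγ.total hp hb with hpb | hbp
    · exact hpb
    · exact (hγ.injOn_fst_add_snd hp hb (by linarith [hbp.1, hbp.2, h.2])) ▸ le_rfl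

end IsChain

namespace MonotonicPath

variable {S γ : Set (ℝ × ℝ)}

lemma isChain (hγ : MonotonicPath S γ) : IsChain (· ≤ ·) γ :=
  fun p hp q hq _ ↦ Prod.mul_sub_nonneg_iff_le_or_le.1 (hγ.2.2 p hp q hq)

lemma inter_Icc (hγ : MonotonicPath S γ) {a b : ℝ × ℝ} (ha : a ∈ γ) (hb : b ∈ γ)
    (hab : a ≤ b) : MonotonicPath S (γ ∩ Icc a b) := by
  refine ⟨inter_subset_left.trans hγ.1, ⟨⟨a, ha, le_rfl, hab⟩, ?_⟩,
    fun p hp q hq ↦ hγ.2.2 p hp.1 q hq.1⟩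
  rw [hγ.isChain.inter_Icc_eq_inter_preimage ha hb]
  exact hγ.isChain.isPreconnected_inter_preimage hγ.2.1.2 ordConnected_Icc

lemma union {γ' : Set (ℝ × ℝ)} (hγ : MonotonicPath S γ) (hγ' : MonotonicPath S γ')
    {q : ℝ × ℝ} (hq : q ∈ γ) (hq' : q ∈ γ') (hle : ∀ p ∈ γ, p ≤ q) (hge : ∀ p ∈ γ', q ≤ p) :
    MonotonicPath S (γ ∪ γ') := by
  refine ⟨union_subset hγ.1 hγ'.1, ⟨⟨q, .inl hq⟩, hγ.2.1.2.union q hq hq' hγ'.2.1.2⟩, ?_⟩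
  rintro p (hp | hp) p' (hp' | hp')
  · exact hγ.2.2 p hp p' hp'
  · exact Prod.mul_sub_nonneg_iff_le_or_le.2 (.inl ((hle p hp).trans (hge p' hp')))
  · exact Prod.mul_sub_nonneg_iff_le_or_le.2 (.inr ((hle p' hp').trans (hge p hp)))
  · exact hγ'.2.2 p hp p' hp'

lemma le_of_mem_top {n x : ℝ} (hγ : MonotonicPath S γ) (hS : ∀ p ∈ S, p.2 ≤ n)
    {p : ℝ × ℝ} (hp : p ∈ γ) (hx : (x, n) ∈ γ)
    (hmax : ∀ u : ℝ, MutuallyReachable S p (u, n) → u ≤ x) : p ≤ (x, n) := by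
  have hpn : p.2 ≤ n := hS p (hγ.1 hp)
  rcases hγ.isChain.total hp hx with h | h
  · exact h
  · have hp_top : p = (p.1, n) := Prod.ext rfl (le_antisymm hpn h.2)
    exact ⟨hmax p.1 ⟨γ, hγ, hp, hp_top ▸ hp⟩, hpn⟩

end MonotonicPath

theorem rUp_monotone_general (m n : ℝ)
    (Dε : Set (ℝ × ℝ)) (hD : Dε ⊆ Icc ((0 : ℝ), (0 : ℝ)) (2 * m, n))
    (rUp : ℝ × ℝ → ℝ)
    (hspec : ∀ p : ℝ × ℝ, (∃ u : ℝ, MutuallyReachable Dε p (u, n)) →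
      MutuallyReachable Dε p (rUp p, n) ∧
        ∀ u : ℝ, MutuallyReachable Dε p (u, n) → u ≤ rUp p)
    (hcross : ∀ γ₁ γ₂ : Set (ℝ × ℝ), MonotonicPath Dε γ₁ → MonotonicPath Dε γ₂ →
      ∀ p₁ ∈ γ₁, ∀ p₂ ∈ γ₂, ∀ x₁ x₂ : ℝ, (x₁, n) ∈ γ₁ → (x₂, n) ∈ γ₂ →
        p₁.1 ≤ p₂.1 → p₂.2 ≤ p₁.2 → x₂ ≤ x₁ → (γ₁ ∩ γ₂).Nonempty)
    (u₁ v₁ u₂ v₂ : ℝ)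
    (h1 : ∃ u : ℝ, MutuallyReachable Dε (u₁, v₁) (u, n))
    (h2 : ∃ u : ℝ, MutuallyReachable Dε (u₂, v₂) (u, n))
    (hu : u₁ ≤ u₂) (hv : v₂ ≤ v₁) :
    rUp (u₁, v₁) ≤ rUp (u₂, v₂) := by
  by_contra! hlt
  have hS : ∀ p ∈ Dε, p.2 ≤ n := fun p hp ↦ (hD hp).2.2
  obtain ⟨⟨γ₁, hγ₁, hp₁, ht₁⟩, hmax₁⟩ := hspec _ h1
  obtain ⟨⟨γ₂, hγ₂, hp₂, ht₂⟩, hmax₂⟩ := hspec _ h2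
  have hle₁ := hγ₁.le_of_mem_top hS hp₁ ht₁ hmax₁
  have hle₂ := hγ₂.le_of_mem_top hS hp₂ ht₂ hmax₂
  obtain ⟨q, ⟨hq₁, -, hq_le⟩, ⟨hq₂, hle_q, -⟩⟩ := hcross _ _ (hγ₁.inter_Icc hp₁ ht₁ hle₁)
    (hγ₂.inter_Icc hp₂ ht₂ hle₂) _ ⟨hp₁, le_rfl, hle₁⟩ _ ⟨hp₂, le_rfl, hle₂⟩ _ _
    ⟨ht₁, hle₁, le_rfl⟩ ⟨ht₂, hle₂, le_rfl⟩ hu hv hlt.le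
  have hspliced := (hγ₂.inter_Icc hp₂ hq₂ hle_q).union (hγ₁.inter_Icc hq₁ ht₁ hq_le)
    ⟨hq₂, hle_q, le_rfl⟩ ⟨hq₁, le_rfl, hq_le⟩ (fun p hp ↦ hp.2.2) (fun p hp ↦ hp.2.1)
  exact hlt.not_ge <| hmax₂ _
    ⟨_, hspliced, .inl ⟨hp₂, le_rfl, hle_q⟩, .inr ⟨ht₁, hq_le, le_rfl⟩⟩

/-- Monotonicity of `r↑`: moving right and down can only increase the rightmost
top point reachable. -/
theorem rUp_monotone (m n : ℝ) (hm : 0 ≤ m) (hn : 0 ≤ n)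
    (Dε : Set (ℝ × ℝ)) (hD : Dε ⊆ Icc ((0 : ℝ), (0 : ℝ)) (2 * m, n))
    (rUp : ℝ × ℝ → ℝ)
    (hspec : ∀ p : ℝ × ℝ, (∃ u : ℝ, MutuallyReachable Dε p (u, n)) →
      MutuallyReachable Dε p (rUp p, n) ∧
        ∀ u : ℝ, MutuallyReachable Dε p (u, n) → u ≤ rUp p)
    (hcross : ∀ γ₁ γ₂ : Set (ℝ × ℝ), MonotonicPath Dε γ₁ → MonotonicPath Dε γ₂ →
      ∀ p₁ ∈ γ₁, ∀ p₂ ∈ γ₂, ∀ x₁ x₂ : ℝ, (x₁, n) ∈ γ₁ → (x₂, n) ∈ γ₂ →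
        p₁.1 ≤ p₂.1 → p₂.2 ≤ p₁.2 → x₂ ≤ x₁ → (γ₁ ∩ γ₂).Nonempty)
    (u₁ v₁ u₂ v₂ : ℝ)
    (h1 : ∃ u : ℝ, MutuallyReachable Dε (u₁, v₁) (u, n))
    (h2 : ∃ u : ℝ, MutuallyReachable Dε (u₂, v₂) (u, n))
    (hu : u₁ ≤ u₂) (hv : v₂ ≤ v₁) :
    rUp (u₁, v₁) ≤ rUp (u₂, v₂) :=
  rUp_monotone_general m n Dε hD rUp hspec hcross u₁ v₁ u₂ v₂ h1 h2 hu hv
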